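/- Two-variable Jack transition matrix inverse: let d ≥ 2 and define the upper-triangular matrix A indexed by 0 ≤ i ≤ j ≤ ⌊d/2⌋ with entries A_{ij} = C(d−2i, j−i)·⟨σ⟩_{j−i}⟨σ⟩_{d−j−i}/⟨σ⟩_{d−2i}. Then its inverse has entries B_{ij} = (−1)^{j−i}·C(d−i−j, j−i)·((d−2i)/(d−i−j))·⟨σ+i−j+1⟩_{d−i−j}·⟨σ+d−i−j+1⟩_{j−i}/⟨σ+1⟩_{d−2i} (with the factor (d−2i)/(d−i−j) interpreted as 1 when i = j = d/2), as an identity of rational functions in σ. -/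

import Mathlib

open Finset

/-
Write `q = d - 2j`. Then `A_{ik} = jackCoeff σ (k - i) (d - i - k)`, and by the reflection
`⟨-σ⟩_s = (-1)^s ⟨σ-s+1⟩_s` the Pochhammer quotient in `B_{kj}` collapses to
`C(q+s, s) ⟨-σ⟩_s / ⟨σ+q+1⟩_s` (times the weight `(q+2s)/(q+s)`) with `s = j - k`: it
depends on `j` only through `q`. So `(AB)_{ij}` is a hypergeometric sum over `t + s = j - i`,
and it is Gosper-summable: its partial sums have the closed form `jackPartialSum`, which
vanishes at `t = 0` and, when `i < j`, cancels the last term.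
-/

/-- The rising factorial (Pochhammer symbol) `⟨x⟩_k = x(x+1)⋯(x+k-1)`. -/
noncomputable def poch (x : ℝ) (k : ℕ) : ℝ := ∏ i ∈ Finset.range k, (x + i)

/-- The transition matrix `A` from two-variable Jack polynomials to monomials:
`A_{ij} = C(d-2i, j-i)·⟨σ⟩_{j-i}⟨σ⟩_{d-j-i}/⟨σ⟩_{d-2i}` for `i ≤ j`, zero otherwise. -/
noncomputable def jackTransition (d : ℕ) (σ : ℝ) :
    Matrix (Fin (d / 2 + 1)) (Fin (d / 2 + 1)) ℝ :=
  Matrix.of fun i j =>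
    if (i : ℕ) ≤ (j : ℕ) then
      ((d - 2 * (i : ℕ)).choose ((j : ℕ) - (i : ℕ))) *
        poch σ ((j : ℕ) - (i : ℕ)) * poch σ (d - (j : ℕ) - (i : ℕ)) /
        poch σ (d - 2 * (i : ℕ))
    else 0

/-- The claimed inverse matrix `B`, with
`B_{ij} = (-1)^{j-i}·C(d-i-j, j-i)·((d-2i)/(d-i-j))·⟨σ+i-j+1⟩_{d-i-j}·⟨σ+d-i-j+1⟩_{j-i}/⟨σ+1⟩_{d-2i}`
(the factor `(d-2i)/(d-i-j)` being interpreted as `1` when `i = j = d/2`). -/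
noncomputable def jackTransitionInv (d : ℕ) (σ : ℝ) :
    Matrix (Fin (d / 2 + 1)) (Fin (d / 2 + 1)) ℝ :=
  Matrix.of fun i j =>
    if (i : ℕ) ≤ (j : ℕ) then
      (-1 : ℝ) ^ ((j : ℕ) - (i : ℕ)) *
        ((d - (i : ℕ) - (j : ℕ)).choose ((j : ℕ) - (i : ℕ))) *
        (if (i : ℕ) = (j : ℕ) then (1 : ℝ)
          else ((d : ℝ) - 2 * (i : ℕ)) / ((d : ℝ) - (i : ℕ) - (j : ℕ))) *
        poch (σ + (i : ℕ) - (j : ℕ) + 1) (d - (i : ℕ) - (j : ℕ)) *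
        poch (σ + (d : ℝ) - (i : ℕ) - (j : ℕ) + 1) ((j : ℕ) - (i : ℕ)) /
        poch (σ + 1) (d - 2 * (i : ℕ))
    else 0

lemma poch_zero (x : ℝ) : poch x 0 = 1 := prod_range_zero _

lemma poch_succ (x : ℝ) (n : ℕ) : poch x (n + 1) = poch x n * (x + n) := prod_range_succ _ _

lemma poch_add (x : ℝ) (m n : ℕ) : poch x (m + n) = poch x m * poch (x + m) n := by
  rw [poch, prod_range_add, poch, poch]
  congr 1
  refine prod_congr rfl fun k _ => ?_
  push_cast
  ring

lemma poch_pos {x : ℝ} (hx : 0 < x) (n : ℕ) : 0 < poch x n :=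
  prod_pos fun _ _ => by positivity

lemma poch_neg (x : ℝ) (n : ℕ) : poch (-x) n = (-1) ^ n * poch (x - n + 1) n := by
  induction n with
  | zero => simp [poch_zero]
  | succ n ih =>
    rw [poch_succ, ih, add_comm n 1, poch_add, poch_succ, poch_zero]
    push_cast
    ring_nf

lemma neg_one_pow_mul_poch_mul_poch_div_poch {x : ℝ} (hx : 0 < x) (s q : ℕ) :
    (-1) ^ s * poch (x - s + 1) (q + s) * poch (x + q + s + 1) s / poch (x + 1) (q + 2 * s) =
      poch (-x) s / poch (x + q + 1) s := by
  have h₁ : poch (x - s + 1) (q + s) = poch (x - s + 1) s * poch (x + 1) q := by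
    rw [add_comm q, poch_add, show x - s + 1 + s = x + 1 by ring]
  have h₂ : poch (x + 1) (q + 2 * s) =
      poch (x + 1) q * poch (x + q + 1) s * poch (x + q + s + 1) s := by
    rw [two_mul, ← add_assoc, poch_add, poch_add]
    push_cast
    ring_nf
  have hq := poch_pos (by positivity : 0 < x + 1) q
  have hs := poch_pos (by positivity : 0 < x + q + 1) s
  have hs' := poch_pos (by positivity : 0 < x + q + s + 1) s
  rw [h₁, h₂, poch_neg]
  field_simp

lemma Fin.sum_ite_le_mul_ite_le {R : Type*} [NonUnitalNonAssocSemiring R] {D i j : ℕ}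
    (hj : j < D) (f g : ℕ → R) :
    ∑ k : Fin D, (if i ≤ (k : ℕ) then f k else 0) * (if (k : ℕ) ≤ j then g k else 0) =
      ∑ t ∈ range (j + 1 - i), f (i + t) * g (i + t) := by
  have hIco : range D ∩ Ico i (j + 1) = Ico i (j + 1) := by
    ext k; simp only [mem_inter, mem_range, mem_Ico]; omega
  rw [Fin.sum_univ_eq_sum_range
      (fun k => (if i ≤ k then f k else 0) * (if k ≤ j then g k else 0)),
    ← sum_Ico_eq_sum_range (fun k => f k * g k), ← hIco, ← sum_ite_mem]
  refine sum_congr rfl fun k _ => ?_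
  by_cases hik : i ≤ k <;> by_cases hkj : k ≤ j <;> simp [hik, hkj]

noncomputable def jackCoeff (σ : ℝ) (m r : ℕ) : ℝ :=
  (m + r).choose m * poch σ m * poch σ r / poch σ (m + r)

noncomputable def jackInvCoeff (σ : ℝ) (s q : ℕ) : ℝ :=
  (q + s).choose s * poch (-σ) s / poch (σ + q + 1) s

noncomputable def jackInvWeight (s q : ℕ) : ℝ :=
  if s = 0 then 1 else ((q : ℝ) + 2 * s) / (q + s)

lemma jackTransition_apply (d : ℕ) (σ : ℝ) (i j : Fin (d / 2 + 1)) :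
    jackTransition d σ i j = if (i : ℕ) ≤ j then jackCoeff σ (j - i) (d - i - j) else 0 := by
  have hij : (i : ℕ) + j ≤ d := by omega
  rw [jackTransition, Matrix.of_apply]
  split_ifs with h
  · rw [jackCoeff, show j - i + (d - i - j) = d - 2 * i by omega,
      show d - j - i = d - i - j by omega]
  · rfl

lemma jackTransitionInv_apply (d : ℕ) (σ : ℝ) (hσ : 0 < σ) (i j : Fin (d / 2 + 1)) :
    jackTransitionInv d σ i j =
      if (i : ℕ) ≤ j then
        jackInvWeight (j - i) (d - 2 * j) * jackInvCoeff σ (j - i) (d - 2 * j)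
      else 0 := by
  obtain ⟨i, hi⟩ := i
  obtain ⟨j, hj⟩ := j
  simp only [jackTransitionInv, Matrix.of_apply]
  by_cases hij : i ≤ j
  swap
  · simp [hij]
  rw [if_pos hij, if_pos hij]
  obtain ⟨s, rfl⟩ := Nat.exists_eq_add_of_le hij
  obtain ⟨q, rfl⟩ : ∃ q, d = 2 * (i + s) + q := ⟨d - 2 * (i + s), by omega⟩
  rw [Nat.add_sub_cancel_left, show 2 * (i + s) + q - i - (i + s) = q + s by omega,
    show 2 * (i + s) + q - 2 * i = q + 2 * s by omega, Nat.add_sub_cancel_left,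
    jackInvWeight, jackInvCoeff, mul_div_assoc (((q + s).choose s : ℕ) : ℝ),
    ← neg_one_pow_mul_poch_mul_poch_div_poch hσ,
    show σ + i - (i + s : ℕ) + 1 = σ - s + 1 by push_cast; ring,
    show σ + (2 * (i + s) + q : ℕ) - i - (i + s : ℕ) + 1 = σ + q + s + 1 by push_cast; ring]
  simp only [show i = i + s ↔ s = 0 by omega]
  split_ifs
  · ring
  · push_cast
    ring

lemma jackCoeff_zero_left (σ : ℝ) (hσ : 0 < σ) (r : ℕ) : jackCoeff σ 0 r = 1 := by
  rw [jackCoeff, zero_add, Nat.choose_zero_right, poch_zero, Nat.cast_one, one_mul, one_mul,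
    div_self (poch_pos hσ r).ne']

lemma jackInvCoeff_zero_left (σ : ℝ) (q : ℕ) : jackInvCoeff σ 0 q = 1 := by
  simp [jackInvCoeff, poch_zero]

lemma jackCoeff_succ_left_mul (σ : ℝ) (t r : ℕ) :
    jackCoeff σ (t + 1) r * ((t + 1) * (σ + r)) =
      jackCoeff σ t (r + 1) * ((r + 1) * (σ + t)) := by
  have hchoose :
      ((t + (r + 1)).choose (t + 1) : ℝ) * (t + 1) = (t + (r + 1)).choose t * (r + 1) := by
    exact_mod_cast
      (Nat.choose_succ_right_eq (t + (r + 1)) t).trans (by rw [Nat.add_sub_cancel_left])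
  rw [jackCoeff, jackCoeff, show t + 1 + r = t + (r + 1) by ring, poch_succ, poch_succ,
    div_mul_eq_mul_div, div_mul_eq_mul_div]
  congr 1
  linear_combination (poch σ t * poch σ r * (σ + t) * (σ + r)) * hchoose

lemma jackInvCoeff_succ_left_mul (σ : ℝ) (hσ : 0 < σ) (s q : ℕ) :
    jackInvCoeff σ (s + 1) q * ((s + 1) * (σ + q + s + 1)) =
      jackInvCoeff σ s q * ((q + s + 1) * (s - σ)) := by
  have hchoose : ((q + s + 1).choose (s + 1) : ℝ) * (s + 1) = (q + s).choose s * (q + s + 1) := by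
    exact_mod_cast (Nat.add_one_mul_choose_eq (q + s) s).symm.trans (mul_comm _ _)
  have hpos : 0 < poch (σ + q + 1) s := poch_pos (by positivity) s
  rw [jackInvCoeff, jackInvCoeff, ← add_assoc, poch_succ, poch_succ]
  field_simp
  linear_combination (poch (-σ) s * (s - σ) * (σ + q + s + 1)) * hchoose

noncomputable def jackConvTerm (σ : ℝ) (q t s : ℕ) : ℝ :=
  jackCoeff σ t (q + t + 2 * s) * (jackInvWeight s q * jackInvCoeff σ s q)

noncomputable def jackPartialSum (σ : ℝ) (q t s : ℕ) : ℝ :=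
  t / (t + s) * ((σ + q + t + 2 * s) * (s - σ) / (σ * (σ + q + t + s))) *
    jackCoeff σ t (q + t + 2 * s) * jackInvCoeff σ s q

lemma jackPartialSum_add_jackConvTerm (σ : ℝ) (hσ : 0 < σ) (q t s : ℕ) :
    jackPartialSum σ q t (s + 1) + jackConvTerm σ q t (s + 1) =
      jackPartialSum σ q (t + 1) s := by
  have hα := jackCoeff_succ_left_mul σ t (q + t + 2 * s + 1)
  have hβ := jackInvCoeff_succ_left_mul σ hσ s q
  rw [← eq_div_iff (by positivity)] at hα hβ
  rw [jackPartialSum, jackPartialSum, jackConvTerm, jackInvWeight, if_neg s.succ_ne_zero,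
    show q + (t + 1) + 2 * s = q + t + 2 * s + 1 by ring,
    show q + t + 2 * (s + 1) = q + t + 2 * s + 1 + 1 by ring, hα, hβ]
  push_cast
  field_simp
  ring

lemma sum_range_jackConvTerm (σ : ℝ) (hσ : 0 < σ) (q t s : ℕ) :
    ∑ u ∈ range t, jackConvTerm σ q u (t + s - u) = jackPartialSum σ q t s := by
  induction t generalizing s with
  | zero => simp [jackPartialSum]
  | succ t ih =>
    rw [sum_range_succ, ← jackPartialSum_add_jackConvTerm σ hσ, ← ih (s + 1)]
    congr 1
    · exact sum_congr rfl fun u _ => by rw [add_right_comm, add_assoc]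
    · rw [show t + 1 + s - t = s + 1 by omega]

lemma sum_range_succ_jackConvTerm (σ : ℝ) (hσ : 0 < σ) (q m : ℕ) :
    ∑ u ∈ range (m + 1), jackConvTerm σ q u (m - u) = if m = 0 then 1 else 0 := by
  have hpartial := sum_range_jackConvTerm σ hσ q m 0
  rw [add_zero] at hpartial
  rw [sum_range_succ, hpartial, jackPartialSum, jackConvTerm, Nat.sub_self, jackInvWeight,
    if_pos rfl, jackInvCoeff_zero_left]
  split_ifs with hm
  · subst hm
    simp [jackCoeff_zero_left σ hσ]
  · have : (m : ℝ) ≠ 0 := by exact_mod_cast hm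
    push_cast
    field_simp
    ring

theorem jackTransition_mul_inv_general (d : ℕ) (σ : ℝ) (hσ : 0 < σ) :
    jackTransition d σ * jackTransitionInv d σ = 1 := by
  ext i j
  have hj : 2 * (j : ℕ) ≤ d := by omega
  rw [Matrix.mul_apply, Matrix.one_apply]
  simp only [jackTransition_apply, jackTransitionInv_apply d σ hσ]
  rw [Fin.sum_ite_le_mul_ite_le j.is_lt (fun k => jackCoeff σ (k - i) (d - i - k))
    (fun k => jackInvWeight (j - k) (d - 2 * j) * jackInvCoeff σ (j - k) (d - 2 * j))]
  rcases le_or_gt (i : ℕ) j with hij | hij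
  · simp only [Fin.ext_iff, show (i : ℕ) = j ↔ (j : ℕ) - i = 0 by omega]
    rw [show (j : ℕ) + 1 - i = j - i + 1 by omega,
      ← sum_range_succ_jackConvTerm σ hσ (d - 2 * j) (j - i)]
    refine sum_congr rfl fun t ht => ?_
    rw [mem_range] at ht
    rw [jackConvTerm, Nat.add_sub_cancel_left, show j - (i + t) = j - i - t by omega,
      show d - i - (i + t) = d - 2 * j + t + 2 * (j - i - t) by omega]
  · rw [Nat.sub_eq_zero_of_le hij, sum_range_zero, if_neg (fun h => by omega)]

/-- The two matrices are mutually inverse, as an identity of rational functions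
in `σ` (stated for all `σ > 0`). -/
theorem jackTransition_mul_inv (d : ℕ) (hd : 2 ≤ d) (σ : ℝ) (hσ : 0 < σ) :
    jackTransition d σ * jackTransitionInv d σ = 1 :=
  jackTransition_mul_inv_general d σ hσ
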